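/- In the poset of 312-avoiding TITOs under the Dyer order, every chain has at most C(n+1, 2) + 1 elements (where C(n+1,2) = n(n+1)/2), and there exists a chain with exactly C(n+1, 2) + 1 elements. Equivalently, the maximum length of a maximal chain in the cyclic Tamari lattice is C(n+1, 2). -/

import Mathlib

structure TITO (n : ℕ) where
  rel : ℤ → ℤ → Prop
  refl : ∀ a, rel a a
  antisymm : ∀ a b, rel a b → rel b a → a = b
  trans : ∀ a b c, rel a b → rel b c → rel a c
  total : ∀ a b, rel a b ∨ rel b a
  invariant : ∀ a b, rel a b ↔ rel (a + n) (b + n)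

namespace TITO

variable {n : ℕ}

/-- The inversion set of a TITO. -/
def Inversions (t : TITO n) : Set (ℤ × ℤ) := {p | p.1 < p.2 ∧ t.rel p.2 p.1}

/-- A TITO is 312-avoiding if there are no integers `a < b < c` with `c ≼ a` and `a ≼ b`. -/
def Avoids312 (t : TITO n) : Prop :=
  ¬ ∃ a b c : ℤ, a < b ∧ b < c ∧ t.rel c a ∧ t.rel a b

/-- A TITO is 132-avoiding if there are no integers `a < b < c` with `a ≼ c` and `c ≼ b`. -/
def Avoids132 (t : TITO n) : Prop :=
  ¬ ∃ a b c : ℤ, a < b ∧ b < c ∧ t.rel a c ∧ t.rel c b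

/-- A set is order-convex for a TITO. -/
def OrderConvex (t : TITO n) (S : Set ℤ) : Prop :=
  ∀ x ∈ S, ∀ z ∈ S, ∀ y : ℤ, t.rel x y → t.rel y z → y ∈ S

/-- A block of a TITO: an order-convex set with no minimal and no maximal element in which
all intervals are finite. -/
def IsBlock (t : TITO n) (I : Set ℤ) : Prop :=
  t.OrderConvex I ∧
  (∀ a ∈ I, ∃ b ∈ I, b ≠ a ∧ t.rel b a) ∧
  (∀ a ∈ I, ∃ b ∈ I, b ≠ a ∧ t.rel a b) ∧
  (∀ a ∈ I, ∀ c ∈ I, t.rel a c → {b : ℤ | t.rel a b ∧ t.rel b c}.Finite)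

/-- A block is waxing if `a ≼ a + n` for every `a` in it. -/
def Waxing (t : TITO n) (I : Set ℤ) : Prop := ∀ a ∈ I, t.rel a (a + n)

/-- A block is waning if `a + n ≼ a` for every `a` in it. -/
def Waning (t : TITO n) (I : Set ℤ) : Prop := ∀ a ∈ I, t.rel (a + n) a

/-- A TITO is real if `a ≼ a + n` whenever the residue class of `a` mod `n` is order-convex. -/
def IsReal (t : TITO n) : Prop :=
  ∀ a : ℤ, t.OrderConvex {x : ℤ | ∃ k : ℤ, x = a + k * n} → t.rel a (a + n)

/-- A TITO is co-real if `a + n ≼ a` whenever the residue class of `a` mod `n` is order-convex. -/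
def IsCoReal (t : TITO n) : Prop :=
  ∀ a : ℤ, t.OrderConvex {x : ℤ | ∃ k : ℤ, x = a + k * n} → t.rel (a + n) a

/-- `(a, b)` with `a < b` is a lower wall if `b ≼ a` is a cover relation of the total order. -/
def LowerWall (t : TITO n) (a b : ℤ) : Prop :=
  a < b ∧ t.rel b a ∧ ∀ z : ℤ, z ≠ a → z ≠ b → ¬ (t.rel b z ∧ t.rel z a)

end TITO

/-- A chain in the subposet `P` of TITOs ordered by the Dyer order. -/
def IsChainIn {n : ℕ} (P C : Set (TITO n)) : Prop :=
  C ⊆ P ∧ ∀ x ∈ C, ∀ y ∈ C, x.Inversions ⊆ y.Inversions ∨ y.Inversions ⊆ x.Inversions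

/-- A maximal chain in the subposet `P` of TITOs ordered by the Dyer order. -/
def IsMaxChainIn {n : ℕ} (P C : Set (TITO n)) : Prop :=
  IsChainIn P C ∧ ∀ C' : Set (TITO n), IsChainIn P C' → C ⊆ C' → C = C'

/-!
In a 312-avoiding TITO the inversions `(a, b)` with fixed `a` are those with `a < b ≤ a + m` for
some `m`, and either `m < n` or `a + n ≼ a`; in the latter case every `b > a` lies below `a` (the
residue of `a` is waning). Count, for each gap `w + 1 ≤ n`, the residues carrying an inversion of
that gap, capped at `n - w`. The sum of these counts is at most `C(n + 1, 2)` and strictly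
increases along a strict inclusion of inversion sets: a new inversion at a non-waning residue
raises a count that is never capped, since a residue with largest gap `m` keeps `w` residues from
having gap `w`; a newly waning residue raises the count at gap `n - k`, where `k` is the number of
residues that were waning before. Conversely, making the residues `0, 1, …, n - 1` waning one
after the other, each one first acquiring the inversions `(p, p + 1), …, (p, p + j)` for
`j < n - p`, gives a chain with `C(n + 1, 2) + 1` elements.
-/

theorem sum_range_sub_eq_choose (n : ℕ) :
    ∑ p ∈ Finset.range n, (n - p) = (n + 1).choose 2 := by
  rw [Nat.choose_two_right, ← Finset.sum_range_id, Finset.sum_range_succ',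
    ← Finset.sum_range_reflect]
  refine Finset.sum_congr rfl fun p hp => ?_
  rw [Finset.mem_range] at hp
  omega

theorem card_add_le_of_forall_emod_notMem {n : ℕ} (hn : 0 < n) {S : Finset ℤ}
    (hS : S ⊆ Finset.Ico 0 (n : ℤ)) {x : ℤ} {w : ℕ} (hw : w ≤ n)
    (hx : ∀ y ∈ Finset.Ico x (x + w), y % n ∉ S) : S.card + w ≤ n := by
  set B := (Finset.Ico x (x + w)).image (· % (n : ℤ))
  have hB : B.card = w := by
    rw [Finset.card_image_of_injOn, Int.card_Ico]
    · omega
    · intro y hy z hz hyz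
      simp only [Finset.coe_Ico, Set.mem_Ico] at hy hz
      have := Int.eq_zero_of_abs_lt_dvd (Int.ModEq.dvd hyz) (by rw [abs_lt]; omega)
      omega
  have hBS : Disjoint S B := by
    rw [Finset.disjoint_right]
    intro z hz
    obtain ⟨y, hy, rfl⟩ := Finset.mem_image.mp hz
    exact hx y hy
  have hBsub : B ⊆ Finset.Ico 0 (n : ℤ) := by
    intro z hz
    obtain ⟨y, -, rfl⟩ := Finset.mem_image.mp hz
    rw [Finset.mem_Ico]
    exact ⟨Int.emod_nonneg y (by omega), Int.emod_lt_of_pos y (by omega)⟩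
  calc S.card + w = (S ∪ B).card := by rw [Finset.card_union_of_disjoint hBS, hB]
    _ ≤ (Finset.Ico 0 (n : ℤ)).card := Finset.card_le_card (Finset.union_subset hS hBsub)
    _ = n := by simp

namespace TITO

variable {n : ℕ}

theorem rel_iff_not_rel (t : TITO n) {a b : ℤ} (hab : a ≠ b) : t.rel a b ↔ ¬ t.rel b a :=
  ⟨fun h h' => hab (t.antisymm a b h h'), (t.total a b).resolve_right⟩

theorem inversions_injective : Function.Injective (Inversions : TITO n → Set (ℤ × ℤ)) := by
  intro s t h
  have hinv : ∀ a b, a < b → (s.rel b a ↔ t.rel b a) := fun a b hab => by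
    simpa [Inversions, hab] using Set.ext_iff.mp h (a, b)
  have hrel : s.rel = t.rel := by
    funext a b
    apply propext
    rcases lt_trichotomy a b with hab | rfl | hab
    · rw [s.rel_iff_not_rel hab.ne, t.rel_iff_not_rel hab.ne, hinv a b hab]
    · exact ⟨fun _ => t.refl a, fun _ => s.refl a⟩
    · exact hinv b a hab
  cases s
  cases t
  cases hrel
  rfl

theorem rel_add_mul_iff (t : TITO n) (k : ℤ) (a b : ℤ) :
    t.rel (a + k * n) (b + k * n) ↔ t.rel a b := by
  induction k using Int.induction_on with
  | zero => simp
  | succ i ih =>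
    have e : ∀ x : ℤ, x + (i + 1 : ℤ) * n = x + i * n + n := fun x => by ring
    rw [e, e, ← t.invariant, ih]
  | pred i ih =>
    have e : ∀ x : ℤ, x + (-i : ℤ) * n = x + (-i - 1 : ℤ) * n + n := fun x => by ring
    rw [e, e, ← t.invariant] at ih
    exact ih

theorem Avoids312.rel_of_le {t : TITO n} (ht : t.Avoids312) {a b c : ℤ} (hab : a ≤ b)
    (hbc : b ≤ c) (h : t.rel c a) : t.rel b a := by
  rcases hab.eq_or_lt with rfl | hab
  · exact t.refl a
  rcases hbc.eq_or_lt with rfl | hbc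
  · exact h
  · exact (t.total a b).resolve_left fun h' => ht ⟨a, b, c, hab, hbc, h, h'⟩

theorem Avoids312.rel_of_rel_add_self {t : TITO n} (ht : t.Avoids312) (hn : 0 < n) {a b : ℤ}
    (h : t.rel (a + n) a) (hab : a < b) : t.rel b a := by
  suffices ∀ k : ℕ, t.rel (a + 1 + k) a by
    obtain ⟨k, rfl⟩ : ∃ k : ℕ, b = a + 1 + k := ⟨(b - a - 1).toNat, by omega⟩
    exact this k
  intro k
  induction k using Nat.strong_induction_on with
  | _ k ih =>
    by_cases hk : k < n
    · exact ht.rel_of_le (by omega) (by omega) h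
    · have h' := (t.invariant _ _).mp (ih (k - n) (by omega))
      rw [show a + 1 + ((k - n : ℕ) : ℤ) + n = a + 1 + k by omega] at h'
      exact t.trans _ _ _ h' h

theorem Avoids312.lt_add_of_rel {t : TITO n} (ht : t.Avoids312) (hn : 0 < n) {a b : ℤ}
    (hfin : t.rel a (a + n)) (h : t.rel b a) : b < a + n := by
  by_contra! hb
  have := t.antisymm _ _ hfin (ht.rel_of_le (by omega) hb h)
  omega

theorem Avoids312.rel_add_self_of_rel {t : TITO n} (ht : t.Avoids312) (hn : 0 < n) {a b : ℤ}
    (hb : t.rel (b + n) b) (h : t.rel b a) : t.rel (a + n) a := by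
  rcases le_or_gt (a + n) b with hle | hlt
  · exact ht.rel_of_le (by omega) hle h
  · exact t.trans _ _ _ (ht.rel_of_rel_add_self hn hb hlt) h

open Classical in
noncomputable def gapResidues (t : TITO n) (w : ℕ) : Finset ℤ :=
  (Finset.Ico 0 (n : ℤ)).filter fun q => t.rel (q + w) q

open Classical in
theorem mem_gapResidues {t : TITO n} {w : ℕ} {q : ℤ} :
    q ∈ t.gapResidues w ↔ (0 ≤ q ∧ q < n) ∧ t.rel (q + w) q := by
  simp [gapResidues]

theorem gapResidues_subset (t : TITO n) (w : ℕ) : t.gapResidues w ⊆ Finset.Ico 0 (n : ℤ) :=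
  fun _ hq => Finset.mem_Ico.mpr (mem_gapResidues.mp hq).1

theorem emod_mem_gapResidues (t : TITO n) (hn : 0 < n) {w : ℕ} (x : ℤ) :
    x % n ∈ t.gapResidues w ↔ t.rel (x + w) x := by
  have hx : x % n + x / n * n = x := by rw [mul_comm]; exact Int.emod_add_mul_ediv x n
  rw [mem_gapResidues, ← t.rel_add_mul_iff (x / n), add_right_comm, hx]
  exact and_iff_right ⟨Int.emod_nonneg x (by omega), Int.emod_lt_of_pos x (by omega)⟩

theorem gapResidues_mono {s t : TITO n} (h : s.Inversions ⊆ t.Inversions) {w : ℕ}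
    (hw : 0 < w) : s.gapResidues w ⊆ t.gapResidues w := by
  intro q hq
  rw [mem_gapResidues] at hq ⊢
  exact ⟨hq.1, (h (show (q, q + w) ∈ s.Inversions from ⟨by omega, hq.2⟩)).2⟩

theorem Avoids312.card_gapResidues_add_le {t : TITO n} (ht : t.Avoids312) (hn : 0 < n) {q : ℤ}
    {w : ℕ} (hfin : t.rel q (q + n)) (hgap : t.rel (q + w) q) :
    (t.gapResidues w).card + w ≤ n := by
  classical
  set m := Nat.findGreatest (fun k : ℕ => t.rel (q + k) q) n
  have hm : t.rel (q + m) q :=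
    Nat.findGreatest_spec (P := fun k : ℕ => t.rel (q + k) q) (Nat.zero_le n)
      (by simpa using t.refl q)
  have hmax : ∀ k : ℕ, t.rel (q + k) q → k ≤ m := fun k hk =>
    Nat.le_findGreatest (by have := ht.lt_add_of_rel hn hfin hk; omega) hk
  have hwm := hmax w hgap
  have hmn := ht.lt_add_of_rel hn hfin hm
  -- a residue of the window `(q + m - w, q + m]` with gap `w` would give `q` a gap beyond `m`
  refine card_add_le_of_forall_emod_notMem hn (t.gapResidues_subset w) (x := q + m - w + 1)
    (by omega) fun y hy hgap' => ?_
  rw [Finset.mem_Ico] at hy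
  rw [t.emod_mem_gapResidues hn] at hgap'
  have hyq : t.rel (y + w) q := t.trans _ _ _ hgap' (ht.rel_of_le (by omega) (by omega) hm)
  have := hmax (y + w - q).toNat (by rwa [show q + ((y + w - q).toNat : ℤ) = y + w by omega])
  omega

theorem Avoids312.card_gapResidues_self_add_lt {t : TITO n} (ht : t.Avoids312) (hn : 0 < n)
    {q : ℤ} {w : ℕ} (hfin : t.rel q (q + n)) (hgap : t.rel (q + w) q) :
    (t.gapResidues n).card + w < n := by
  have hw := ht.lt_add_of_rel hn hfin hgap
  -- none of `q, …, q + w` is waning, or `q` would be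
  have := card_add_le_of_forall_emod_notMem hn (t.gapResidues_subset n) (x := q) (w := w + 1)
    (by omega) fun y hy hwaning => by
      rw [Finset.mem_Ico] at hy
      rw [t.emod_mem_gapResidues hn] at hwaning
      have hyq : t.rel y q := ht.rel_of_le (by omega) (by omega) hgap
      have := t.antisymm _ _ hfin (ht.rel_add_self_of_rel hn hwaning hyq)
      omega
  omega

theorem Avoids312.gapResidues_self_subset {t : TITO n} (ht : t.Avoids312) (hn : 0 < n) {w : ℕ}
    (hw : 0 < w) : t.gapResidues n ⊆ t.gapResidues w := fun q hq => by
  rw [mem_gapResidues] at hq ⊢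
  exact ⟨hq.1, ht.rel_of_rel_add_self hn hq.2 (by omega)⟩

theorem Avoids312.gapResidues_subset_self {t : TITO n} (ht : t.Avoids312) (hn : 0 < n) {w : ℕ}
    (hw : n ≤ (t.gapResidues n).card + w) : t.gapResidues w ⊆ t.gapResidues n := fun q hq => by
  rw [mem_gapResidues] at hq ⊢
  refine ⟨hq.1, (t.total _ _).resolve_left fun hfin => ?_⟩
  have := ht.card_gapResidues_self_add_lt hn hfin hq.2
  omega

noncomputable def cappedGapCount (t : TITO n) (w : ℕ) : ℕ :=
  min (t.gapResidues (w + 1)).card (n - w)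

noncomputable def rank (t : TITO n) : ℕ :=
  ∑ w ∈ Finset.range n, t.cappedGapCount w

theorem rank_le (t : TITO n) : t.rank ≤ (n + 1).choose 2 :=
  (Finset.sum_le_sum fun _ _ => min_le_right _ _).trans (sum_range_sub_eq_choose n).le

theorem cappedGapCount_mono {s t : TITO n} (h : s.Inversions ⊆ t.Inversions) (w : ℕ) :
    s.cappedGapCount w ≤ t.cappedGapCount w :=
  min_le_min_right _ (Finset.card_le_card (gapResidues_mono h w.succ_pos))

theorem Avoids312.cappedGapCount_lt_of_rel_add {s t : TITO n} (ht : t.Avoids312) (hn : 0 < n)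
    (h : s.Inversions ⊆ t.Inversions) {a : ℤ} {d : ℕ} (hfin : t.rel a (a + n))
    (htd : t.rel (a + (d + 1 : ℕ)) a) (hsd : ¬ s.rel (a + (d + 1 : ℕ)) a) :
    d < n ∧ s.cappedGapCount d < t.cappedGapCount d := by
  have hcard := Finset.card_lt_card <| (Finset.ssubset_iff_of_subset
    (gapResidues_mono h (by omega : 0 < d + 1))).mpr
    ⟨a % n, (t.emod_mem_gapResidues hn a).mpr htd, (s.emod_mem_gapResidues hn a).not.mpr hsd⟩
  have := ht.card_gapResidues_add_le hn hfin htd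
  unfold cappedGapCount
  omega

theorem Avoids312.exists_cappedGapCount_lt_of_rel_add_self {s t : TITO n} (hs : s.Avoids312)
    (ht : t.Avoids312) (hn : 0 < n) (h : s.Inversions ⊆ t.Inversions) {a b : ℤ} (hab : a < b)
    (hwaning : t.rel (a + n) a) (hsba : ¬ s.rel b a) :
    ∃ w < n, s.cappedGapCount w < t.cappedGapCount w := by
  have hsfin : s.rel a (a + n) := (s.total _ _).resolve_right fun h' =>
    hsba (hs.rel_of_rel_add_self hn h' hab)
  set k := (s.gapResidues n).card
  have hk : k < n := by
    simpa using hs.card_gapResidues_self_add_lt hn hsfin (w := 0) (by simpa using s.refl a)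
  have hs_le : (s.gapResidues (n - k)).card ≤ k :=
    Finset.card_le_card (hs.gapResidues_subset_self hn (by omega))
  have hnotin : a % n ∉ s.gapResidues n := by
    rw [s.emod_mem_gapResidues hn]
    intro h'
    have := s.antisymm _ _ hsfin h'
    omega
  have ht_ge : insert (a % n) (s.gapResidues n) ⊆ t.gapResidues (n - k) :=
    Finset.insert_subset
      ((t.emod_mem_gapResidues hn a).mpr (ht.rel_of_rel_add_self hn hwaning (by omega)))
      ((gapResidues_mono h hn).trans (ht.gapResidues_self_subset hn (by omega)))
  have := Finset.card_le_card ht_ge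
  rw [Finset.card_insert_of_notMem hnotin] at this
  refine ⟨n - k - 1, by omega, ?_⟩
  unfold cappedGapCount
  rw [show n - k - 1 + 1 = n - k by omega]
  omega

theorem Avoids312.rank_lt_rank (hn : 0 < n) {s t : TITO n} (hs : s.Avoids312) (ht : t.Avoids312)
    (hst : s.Inversions ⊂ t.Inversions) : s.rank < t.rank := by
  obtain ⟨⟨a, b⟩, ⟨hab, htba⟩, hsba⟩ := Set.exists_of_ssubset hst
  have hsba' : ¬ s.rel b a := fun h => hsba ⟨hab, h⟩
  refine Finset.sum_lt_sum (fun w _ => cappedGapCount_mono hst.1 w) ?_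
  rcases t.total a (a + n) with hfin | hwaning
  · obtain ⟨d, rfl⟩ : ∃ d : ℕ, b = a + (d + 1 : ℕ) := ⟨(b - a - 1).toNat, by omega⟩
    obtain ⟨hd, hlt⟩ := ht.cappedGapCount_lt_of_rel_add hn hst.1 hfin htba hsba'
    exact ⟨d, Finset.mem_range.mpr hd, hlt⟩
  · obtain ⟨w, hw, hlt⟩ :=
      hs.exists_cappedGapCount_lt_of_rel_add_self ht hn hst.1 hab hwaning hsba'
    exact ⟨w, Finset.mem_range.mpr hw, hlt⟩

theorem Avoids312.chain_finite_and_ncard_le (hn : 0 < n) {C : Set (TITO n)}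
    (hC : IsChainIn {t : TITO n | t.Avoids312} C) :
    C.Finite ∧ C.ncard ≤ (n + 1).choose 2 + 1 := by
  have hinj : Set.InjOn rank C := by
    intro s hs t ht hst
    by_contra hne
    have hne' := inversions_injective.ne hne
    rcases hC.2 s hs t ht with h | h
    · exact (hC.1 hs).rank_lt_rank hn (hC.1 ht) (h.ssubset_of_ne hne') |>.ne hst
    · exact (hC.1 ht).rank_lt_rank hn (hC.1 hs) (h.ssubset_of_ne hne'.symm) |>.ne hst.symm
  have hmaps : Set.MapsTo rank C (Set.Iic ((n + 1).choose 2)) := fun t _ => rank_le t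
  refine ⟨Set.Finite.of_injOn hmaps hinj (Set.finite_Iic _), ?_⟩
  calc C.ncard ≤ (Set.Iic ((n + 1).choose 2)).ncard :=
        Set.ncard_le_ncard_of_injOn rank hmaps hinj (Set.finite_Iic _)
    _ = (n + 1).choose 2 + 1 := by rw [← Finset.coe_Iic, Set.ncard_coe_finset, Nat.card_Iic]

def ofKey {α : Type*} [LinearOrder α] (f : ℤ → α) (hf : Function.Injective f)
    (hshift : ∀ a b, f a ≤ f b ↔ f (a + n) ≤ f (b + n)) : TITO n where
  rel a b := f a ≤ f b
  refl _ := le_rfl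
  antisymm _ _ hab hba := hf (le_antisymm hab hba)
  trans _ _ _ := le_trans
  total _ _ := le_total _ _
  invariant := hshift

/- The residues below `p` are put, in decreasing order, above everything else, so they are
waning; the other integers keep their order, except that each `x ≡ p` is moved just above `x + j`,
so that its inversions are `(x, x + 1), …, (x, x + j)`. -/
def stairKey (n p j : ℕ) (x : ℤ) : ℤ ×ₗ ℤ :=
  if x % n < p then toLex (1, -x)
  else if x % n = p then toLex (0, 2 * (x + j) + 1)
  else toLex (0, 2 * x)

theorem stairKey_injective (n p j : ℕ) : Function.Injective (stairKey n p j) := by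
  intro x y h
  unfold stairKey at h
  split_ifs at h <;> simp only [toLex_inj, Prod.mk.injEq] at h <;> omega

theorem stairKey_le_add_iff (n p j : ℕ) (a b : ℤ) :
    stairKey n p j a ≤ stairKey n p j b ↔
      stairKey n p j (a + n) ≤ stairKey n p j (b + n) := by
  unfold stairKey
  rw [Int.add_emod_right, Int.add_emod_right]
  split_ifs <;> simp only [Prod.Lex.toLex_le_toLex, true_and] <;> omega

def stair (n p j : ℕ) : TITO n :=
  ofKey (stairKey n p j) (stairKey_injective n p j) (stairKey_le_add_iff n p j)

theorem stair_rel_iff (hn : 0 < n) {p j : ℕ} (hpj : p < n → p + j < n) {a b : ℤ}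
    (hab : a < b) : (stair n p j).rel b a ↔ a % n < p ∨ (a % n = p ∧ b ≤ a + j) := by
  have := Int.emod_nonneg a (b := n) (by omega)
  have := Int.emod_lt_of_pos a (b := n) (by omega)
  have := Int.emod_nonneg b (b := n) (by omega)
  have := Int.emod_lt_of_pos b (b := n) (by omega)
  have hb : a % n = p → b ≤ a + j → b % n = p + (b - a) := fun hap hbj => by
    have hdiv : b = p + (b - a) + n * (a / n) := by linarith [Int.emod_add_mul_ediv a n]
    calc b % n = (p + (b - a) + n * (a / n)) % n := by rw [← hdiv]
      _ = p + (b - a) := by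
        rw [Int.add_mul_emod_self_left, Int.emod_eq_of_lt (by omega) (by omega)]
  change stairKey n p j b ≤ stairKey n p j a ↔ _
  unfold stairKey
  split_ifs <;> simp only [Prod.Lex.toLex_le_toLex, true_and] <;> omega

theorem stair_avoids312 (hn : 0 < n) {p j : ℕ} (hpj : p < n → p + j < n) :
    (stair n p j).Avoids312 := by
  rintro ⟨a, b, c, hab, hbc, hca, hab'⟩
  have := (stair_rel_iff hn hpj (hab.trans hbc)).mp hca
  have hba := (stair_rel_iff hn hpj hab).mpr (by omega)
  have := (stair n p j).antisymm _ _ hab' hba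
  omega

theorem stair_inversions_subset (hn : 0 < n) {p j p' j' : ℕ} (hpj : p < n → p + j < n)
    (hpj' : p' < n → p' + j' < n) (h : toLex (p, j) ≤ toLex (p', j')) :
    (stair n p j).Inversions ⊆ (stair n p' j').Inversions := by
  rw [Prod.Lex.toLex_le_toLex] at h
  rintro ⟨a, b⟩ ⟨hab, hba⟩
  have := (stair_rel_iff hn hpj hab).mp hba
  exact ⟨hab, (stair_rel_iff hn hpj' hab).mpr (by omega)⟩

theorem stair_ne (hn : 0 < n) {p j p' j' : ℕ} (hpj : p + j < n) (hpj' : p' < n → p' + j' < n)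
    (h : toLex (p, j) < toLex (p', j')) : stair n p j ≠ stair n p' j' := by
  rw [Prod.Lex.toLex_lt_toLex] at h
  have hp : (p : ℤ) % n = p := Int.emod_eq_of_lt (by omega) (by omega)
  intro heq
  have hrel := (stair_rel_iff hn hpj' (by omega : (p : ℤ) < p + j + 1)).mpr (by omega)
  rw [← heq, stair_rel_iff hn (fun _ => hpj) (by omega)] at hrel
  omega

-- the pairs `(p, j)` with `j < n - p`, and `(n, 0)`
def stairIndex (n : ℕ) : Finset (ℕ × ℕ) :=
  ((Finset.range (n + 1)).sigma fun p => Finset.range (max (n - p) 1)).map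
    (Equiv.sigmaEquivProd ℕ ℕ).toEmbedding

theorem mem_stairIndex {x : ℕ × ℕ} :
    x ∈ stairIndex n ↔ x.1 < n + 1 ∧ x.2 < max (n - x.1) 1 := by
  simp [stairIndex]

theorem card_stairIndex (n : ℕ) : (stairIndex n).card = (n + 1).choose 2 + 1 := by
  rw [stairIndex, Finset.card_map, Finset.card_sigma, Finset.sum_range_succ,
    ← sum_range_sub_eq_choose]
  simp only [Finset.card_range, Nat.sub_self]
  congr 1
  exact Finset.sum_congr rfl fun p hp => max_eq_left (by simp at hp; omega)

theorem exists_chain_avoids312 (hn : 0 < n) :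
    ∃ C : Set (TITO n), IsChainIn {t | t.Avoids312} C ∧ C.ncard = (n + 1).choose 2 + 1 := by
  have hvalid : ∀ x ∈ stairIndex n, x.1 < n → x.1 + x.2 < n := fun x hx => by
    rw [mem_stairIndex] at hx
    omega
  have hinj : Set.InjOn (fun x : ℕ × ℕ => stair n x.1 x.2) (stairIndex n) := by
    have key : ∀ x ∈ stairIndex n, ∀ y ∈ stairIndex n,
        toLex x < toLex y → stair n x.1 x.2 ≠ stair n y.1 y.2 := by
      intro x hx y hy hxy
      have := mem_stairIndex.mp hx
      have := mem_stairIndex.mp hy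
      have := Prod.Lex.toLex_lt_toLex.mp hxy
      exact stair_ne hn (by omega) (hvalid y hy) hxy
    intro x hx y hy hxy
    by_contra hne
    rcases lt_or_gt_of_ne (toLex_inj.not.mpr hne) with h | h
    · exact key x hx y hy h hxy
    · exact key y hy x hx h hxy.symm
  refine ⟨(fun x : ℕ × ℕ => stair n x.1 x.2) '' stairIndex n, ⟨?_, ?_⟩, ?_⟩
  · rintro _ ⟨x, hx, rfl⟩
    exact stair_avoids312 hn (hvalid x hx)
  · rintro _ ⟨x, hx, rfl⟩ _ ⟨y, hy, rfl⟩
    rcases le_total (toLex x) (toLex y) with h | h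
    · exact Or.inl (stair_inversions_subset hn (hvalid x hx) (hvalid y hy) h)
    · exact Or.inr (stair_inversions_subset hn (hvalid y hy) (hvalid x hx) h)
  · rw [hinj.ncard_image, Set.ncard_coe_finset, card_stairIndex]

end TITO

theorem stmt19 (n : ℕ) (hn : 2 ≤ n) :
    (∀ C : Set (TITO n), IsChainIn {t : TITO n | t.Avoids312} C →
      C.Finite ∧ C.ncard ≤ Nat.choose (n + 1) 2 + 1) ∧
    (∃ C : Set (TITO n), IsChainIn {t : TITO n | t.Avoids312} C ∧
      C.ncard = Nat.choose (n + 1) 2 + 1) :=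
  ⟨fun _ hC => TITO.Avoids312.chain_finite_and_ncard_le (by omega) hC,
    TITO.exists_chain_avoids312 (by omega)⟩
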